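/- Let b ∈ ℝ and u ∈ (0,1). Then there exists a unique z_l ∈ ℝ with z_l < −b/2 such that Φ(−z_l) − Φ(z_l + b) = 1 − u, and a unique z_h ∈ ℝ with z_h > −b/2 such that Φ(z_h + b) − Φ(−z_h) = 1 − u; equivalently, each value u ∈ (0,1) of the FAB p-value function z ↦ p(z,b) is attained at exactly two points, one on each side of −b/2. -/

import Mathlib

open MeasureTheory ProbabilityTheory

/-- Φ, the standard normal cumulative distribution function. -/
noncomputable def Phi : ℝ → ℝ := fun x => ProbabilityTheory.cdf (gaussianReal 0 1) x

/-- The FAB p-value function. -/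
noncomputable def fabP (z b : ℝ) : ℝ := 1 - |Phi (z + b) - Phi (-z)|

/-!
The map `z ↦ Φ(z + b) - Φ(-z)` is continuous and strictly increasing, from `-1` at `-∞` to `1`
at `+∞`, and it vanishes at `z = -b/2`, where `z + b = -z`. Hence it takes every value in
`(-1, 1)` exactly once: the negative value `u - 1` to the left of `-b/2`, the positive value
`1 - u` to the right of it.
-/

open Filter Topology Set

namespace ProbabilityTheory

variable {μ : Measure ℝ} [IsProbabilityMeasure μ]

lemma continuous_cdf [NullSingletonClass μ] : Continuous (cdf μ) := by
  refine continuous_iff_continuousAt.mpr fun x => ?_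
  rw [(monotone_cdf μ).continuousAt_iff_leftLim_eq_rightLim, (cdf μ).rightLim_eq]
  have hjump : ENNReal.ofReal (cdf μ x - Function.leftLim (cdf μ) x) = 0 := by
    rw [← (cdf μ).measure_singleton, measure_cdf, measure_singleton]
  have hle : Function.leftLim (cdf μ) x ≤ cdf μ x := (monotone_cdf μ).leftLim_le le_rfl
  rw [ENNReal.ofReal_eq_zero] at hjump
  linarith

lemma strictMono_cdf (h : volume ≪ μ) : StrictMono (cdf μ) := by
  intro x y hxy
  have hIoc : μ (Ioc x y) ≠ 0 := fun h0 => by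
    have := h h0
    simp only [Real.volume_Ioc, ENNReal.ofReal_eq_zero] at this
    linarith
  rw [← measure_cdf (μ := μ), (cdf μ).measure_Ioc, ne_eq, ENNReal.ofReal_eq_zero] at hIoc
  linarith

end ProbabilityTheory

lemma StrictMono.existsUnique_eq_of_tendsto {f : ℝ → ℝ} (hmono : StrictMono f)
    (hcont : Continuous f) {l r c : ℝ} (hl : Tendsto f atBot (𝓝 l))
    (hr : Tendsto f atTop (𝓝 r)) (hc : c ∈ Ioo l r) : ∃! x, f x = c := by
  obtain ⟨x, hx⟩ := mem_range_of_exists_le_of_exists_ge hcont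
    (hl.eventually (eventually_le_nhds hc.1)).exists
    (hr.eventually (eventually_ge_nhds hc.2)).exists
  exact ⟨x, hx, fun y hy => hmono.injective (hy.trans hx.symm)⟩

lemma Phi_continuous : Continuous Phi :=
  have := nullSingletonClass_gaussianReal (μ := 0) one_ne_zero
  continuous_cdf

lemma Phi_strictMono : StrictMono Phi :=
  strictMono_cdf (gaussianReal_absolutelyContinuous' 0 one_ne_zero)

lemma strictMono_Phi_add_sub_Phi_neg (b : ℝ) : StrictMono fun z => Phi (z + b) - Phi (-z) :=
  fun _ _ hxy => sub_lt_sub (Phi_strictMono (by linarith)) (Phi_strictMono (by linarith))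

lemma existsUnique_Phi_add_sub_Phi_neg_eq (b c : ℝ) (hc : c ∈ Ioo (-1) 1) :
    ∃! z, Phi (z + b) - Phi (-z) = c := by
  have hcont : Continuous fun z => Phi (z + b) - Phi (-z) :=
    (Phi_continuous.comp (continuous_add_const b)).sub (Phi_continuous.comp continuous_neg)
  have hbot : Tendsto (fun z => Phi (z + b) - Phi (-z)) atBot (𝓝 (0 - 1)) :=
    ((tendsto_cdf_atBot _).comp (tendsto_atBot_add_const_right _ b tendsto_id)).sub
      ((tendsto_cdf_atTop _).comp tendsto_neg_atBot_atTop)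
  have htop : Tendsto (fun z => Phi (z + b) - Phi (-z)) atTop (𝓝 (1 - 0)) :=
    ((tendsto_cdf_atTop _).comp (tendsto_atTop_add_const_right _ b tendsto_id)).sub
      ((tendsto_cdf_atBot _).comp tendsto_neg_atTop_atBot)
  exact (strictMono_Phi_add_sub_Phi_neg b).existsUnique_eq_of_tendsto hcont hbot htop
    (by rwa [zero_sub, sub_zero])

theorem stmt_19 (b u : ℝ) (hu : u ∈ Set.Ioo (0 : ℝ) 1) :
    (∃! zl : ℝ, zl < -b / 2 ∧ Phi (-zl) - Phi (zl + b) = 1 - u) ∧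
      ∃! zh : ℝ, -b / 2 < zh ∧ Phi (zh + b) - Phi (-zh) = 1 - u := by
  obtain ⟨hu0, hu1⟩ := hu
  have hmono := strictMono_Phi_add_sub_Phi_neg b
  have hmid : Phi (-b / 2 + b) - Phi (-(-b / 2)) = 0 := by
    rw [show -b / 2 + b = -(-b / 2) by ring, sub_self]
  constructor
  · obtain ⟨z, hz, huniq⟩ := existsUnique_Phi_add_sub_Phi_neg_eq b (u - 1)
      ⟨by linarith, by linarith⟩
    refine ⟨z, ⟨hmono.lt_iff_lt.mp ?_, by linarith⟩,
      fun y hy => huniq y (by linarith [hy.2])⟩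
    simp only [hz, hmid]
    linarith
  · obtain ⟨z, hz, huniq⟩ := existsUnique_Phi_add_sub_Phi_neg_eq b (1 - u)
      ⟨by linarith, by linarith⟩
    refine ⟨z, ⟨hmono.lt_iff_lt.mp ?_, hz⟩, fun y hy => huniq y hy.2⟩
    simp only [hz, hmid]
    linarith
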